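/- Let ι ∈ ℂ^d and θ ∈ ℂ^d with ι·θ = 0 (dot product without conjugation) and θ·θ = 0, let μ > 0 be a constant and λ ∈ C¹(Ω). Then the vector field φ(x) = ι e^{iθ·x} satisfies the elastostatic system ∇·(μ(∇φ + ∇φᵀ)) + ∇(λ∇·φ) = 0 on Ω. -/

import Mathlib

open MeasureTheory

/-- Partial derivative `∂_{x_j} f(x)` of a function on `ℝ^d`. -/
noncomputable def pderiv9 {d : ℕ} {F : Type*} [NormedAddCommGroup F] [NormedSpace ℝ F]
    (j : Fin d) (f : EuclideanSpace ℝ (Fin d) → F) (x : EuclideanSpace ℝ (Fin d)) : F :=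
  fderiv ℝ f x (EuclideanSpace.single j 1)

/-- Complex geometric optics solution `φ(x) = ι e^{iθ·x}`. -/
noncomputable def cgoSol (d : ℕ) (ι θ : Fin d → ℂ) (x : EuclideanSpace ℝ (Fin d))
    (i : Fin d) : ℂ :=
  ι i * Complex.exp (Complex.I * ∑ j, θ j * (x j : ℂ))

/-! Every derivative of `φ = ι e^{iθ·x}` multiplies it by `iθ_j`. Hence `∇·φ = i(ι·θ)e^{iθ·x}`
vanishes, so the `λ`-term drops out, and the `μ`-term becomes
`-μ e^{iθ·x} ((θ·θ) ι + (ι·θ) θ) = 0`. -/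

open Complex

section PlaneWave

variable {d : ℕ}

noncomputable def phaseCLM (θ : Fin d → ℂ) : EuclideanSpace ℝ (Fin d) →L[ℝ] ℂ :=
  ∑ j, θ j • (ofRealCLM.comp (EuclideanSpace.proj j))

theorem phaseCLM_apply (θ : Fin d → ℂ) (x : EuclideanSpace ℝ (Fin d)) :
    phaseCLM θ x = ∑ j, θ j * (x j : ℂ) := by
  simp [phaseCLM]

theorem phaseCLM_single (θ : Fin d → ℂ) (j : Fin d) :
    phaseCLM θ (EuclideanSpace.single j 1) = θ j := by
  rw [phaseCLM_apply, Finset.sum_eq_single j]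
  · simp
  · intro k _ hk
    simp [hk]
  · simp

noncomputable def planeWave (θ : Fin d → ℂ) (x : EuclideanSpace ℝ (Fin d)) : ℂ :=
  exp (I * ∑ j, θ j * (x j : ℂ))

theorem cgoSol_eq (ι θ : Fin d → ℂ) (x : EuclideanSpace ℝ (Fin d)) (i : Fin d) :
    cgoSol d ι θ x i = ι i * planeWave θ x :=
  rfl

theorem hasFDerivAt_planeWave (θ : Fin d → ℂ) (x : EuclideanSpace ℝ (Fin d)) :
    HasFDerivAt (planeWave θ) ((I * planeWave θ x) • phaseCLM θ) x := by
  have hwave : planeWave θ = fun y => exp (I * phaseCLM θ y) := by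
    funext y
    rw [planeWave, phaseCLM_apply]
  rw [hwave, mul_comm, ← smul_smul]
  exact ((phaseCLM θ).hasFDerivAt.const_mul I).cexp

theorem pderiv9_const_mul_planeWave (θ : Fin d → ℂ) (c : ℂ) (j : Fin d)
    (x : EuclideanSpace ℝ (Fin d)) :
    pderiv9 j (fun y => c * planeWave θ y) x = I * θ j * (c * planeWave θ x) := by
  rw [pderiv9, ((hasFDerivAt_planeWave θ x).const_mul c).fderiv]
  simp only [smul_apply, phaseCLM_single, smul_eq_mul]
  ring

theorem pderiv9_cgoSol (ι θ : Fin d → ℂ) (i j : Fin d) (x : EuclideanSpace ℝ (Fin d)) :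
    pderiv9 j (fun z => cgoSol d ι θ z i) x = I * θ j * cgoSol d ι θ x i :=
  pderiv9_const_mul_planeWave θ (ι i) j x

theorem div_cgoSol_eq_zero {ι θ : Fin d → ℂ} (hdot : ∑ j, ι j * θ j = 0)
    (x : EuclideanSpace ℝ (Fin d)) :
    ∑ k, pderiv9 k (fun z => cgoSol d ι θ z k) x = 0 := by
  calc ∑ k, pderiv9 k (fun z => cgoSol d ι θ z k) x
      = I * planeWave θ x * ∑ k, ι k * θ k := by
        rw [Finset.mul_sum]
        refine Finset.sum_congr rfl fun k _ => ?_
        rw [pderiv9_cgoSol, cgoSol_eq]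
        ring
    _ = 0 := by rw [hdot, mul_zero]

end PlaneWave

theorem pderiv9_const {d : ℕ} {F : Type*} [NormedAddCommGroup F] [NormedSpace ℝ F]
    (j : Fin d) (c : F) (x : EuclideanSpace ℝ (Fin d)) :
    pderiv9 j (fun _ => c) x = 0 := by
  rw [pderiv9, fderiv_const_apply, zero_apply]

theorem stmt9_general (d : ℕ) (Ω : Set (EuclideanSpace ℝ (Fin d)))
    (ι θ : Fin d → ℂ)
    (hdot : ∑ j, ι j * θ j = 0) (hθ : ∑ j, θ j * θ j = 0)
    (μ : ℝ)
    (lam : EuclideanSpace ℝ (Fin d) → ℝ) :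
    ∀ x ∈ Ω, ∀ i : Fin d,
      (∑ j, pderiv9 j (fun y => (μ : ℂ) *
          (pderiv9 j (fun z => cgoSol d ι θ z i) y + pderiv9 i (fun z => cgoSol d ι θ z j) y)) x)
        + pderiv9 i (fun y => (lam y : ℂ) * ∑ k, pderiv9 k (fun z => cgoSol d ι θ z k) y) x
      = 0 := by
  intro x _ i
  have hstress : ∀ j, (fun y => (μ : ℂ) *
      (pderiv9 j (fun z => cgoSol d ι θ z i) y + pderiv9 i (fun z => cgoSol d ι θ z j) y))
      = fun y => μ * I * (θ j * ι i + θ i * ι j) * planeWave θ y := by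
    intro j
    funext y
    rw [pderiv9_cgoSol, pderiv9_cgoSol, cgoSol_eq, cgoSol_eq]
    ring
  have hpressure : (fun y => (lam y : ℂ) * ∑ k, pderiv9 k (fun z => cgoSol d ι θ z k) y)
      = fun _ => 0 := by
    funext y
    rw [div_cgoSol_eq_zero hdot, mul_zero]
  simp only [hstress, hpressure, pderiv9_const_mul_planeWave, pderiv9_const, add_zero]
  calc ∑ j, I * θ j * (μ * I * (θ j * ι i + θ i * ι j) * planeWave θ x)
      = μ * I * I * planeWave θ x * (ι i * ∑ j, θ j * θ j + θ i * ∑ j, ι j * θ j) := by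
        rw [mul_add, Finset.mul_sum, Finset.mul_sum, Finset.mul_sum, Finset.mul_sum,
          ← Finset.sum_add_distrib]
        exact Finset.sum_congr rfl fun j _ => by ring
    _ = 0 := by rw [hθ, hdot]; ring

/-- If `ι·θ = 0`, `θ·θ = 0`, `μ > 0` is constant and `λ ∈ C¹`, then
`φ(x) = ι e^{iθ·x}` solves the elastostatic system
`∇·(μ(∇φ + ∇φᵀ)) + ∇(λ∇·φ) = 0` on `Ω`. -/
theorem stmt9 (d : ℕ) (Ω : Set (EuclideanSpace ℝ (Fin d)))
    (ι θ : Fin d → ℂ)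
    (hdot : ∑ j, ι j * θ j = 0) (hθ : ∑ j, θ j * θ j = 0)
    (μ : ℝ) (hμ : 0 < μ)
    (lam : EuclideanSpace ℝ (Fin d) → ℝ) (hlam : ContDiff ℝ 1 lam) :
    ∀ x ∈ Ω, ∀ i : Fin d,
      (∑ j, pderiv9 j (fun y => (μ : ℂ) *
          (pderiv9 j (fun z => cgoSol d ι θ z i) y + pderiv9 i (fun z => cgoSol d ι θ z j) y)) x)
        + pderiv9 i (fun y => (lam y : ℂ) * ∑ k, pderiv9 k (fun z => cgoSol d ι θ z k) y) x
      = 0 :=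
  stmt9_general d Ω ι θ hdot hθ μ lam
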